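/- If the disturbed system is s-sparse δ-bounded observable, then the set of plausible initial states is contained in the union over all sensor subsets Γ of cardinality p − s with consistent data of the estimate sets 𝓛^D_Γ(U, Y^Γ). -/
import Mathlib


/-- Partial measurement: restriction of the output map `c` to sensors in `Γ`. -/
def out {n p : ℕ} (c : (Fin n → ℝ) → Fin p → ℝ) (Γ : Finset (Fin p))
    (x : Fin n → ℝ) : {i // i ∈ Γ} → ℝ := fun i => c x i.1

/-- Restriction of full measurement data to sensors in `Γ`. -/
def res {p l : ℕ} (Γ : Finset (Fin p)) (y : Fin (l+1) → Fin p → ℝ) :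
    Fin (l+1) → ({i // i ∈ Γ} → ℝ) := fun j i => y j i.1

/-- `z` is a trajectory of the disturbed system `x_{k+1} = F x_k u_k + w_k`. -/
def DTraj {n m l : ℕ} (F : (Fin n → ℝ) → (Fin m → ℝ) → (Fin n → ℝ))
    (u : Fin l → (Fin m → ℝ)) (w : Fin l → (Fin n → ℝ))
    (z : Fin (l+1) → (Fin n → ℝ)) : Prop :=
  ∀ j : Fin l, z j.succ = F (z j.castSucc) (u j) + w j

/-- `(LD, xhat)` is a `δ`-bounded observability map of order `l` for the `Γ`-subsystem:
for attack-free data from any trajectory with disturbances bounded by `wbar`, the estimate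
set `LD` contains the true initial state, and every estimate set is contained in the closed
ball of radius `δ` around the center `xhat`. -/
def IsDObsMap {n m p l : ℕ} (F : (Fin n → ℝ) → (Fin m → ℝ) → (Fin n → ℝ))
    (c : (Fin n → ℝ) → Fin p → ℝ) (Γ : Finset (Fin p)) (wbar δ : ℝ)
    (LD : (Fin l → (Fin m → ℝ)) → (Fin (l+1) → ({i // i ∈ Γ} → ℝ)) → Set (Fin n → ℝ))
    (xhat : (Fin l → (Fin m → ℝ)) → (Fin (l+1) → ({i // i ∈ Γ} → ℝ)) → (Fin n → ℝ)) :
    Prop :=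
  (∀ u w z, (∀ j, ‖w j‖ ≤ wbar) → DTraj F u w z →
      z 0 ∈ LD u (fun j => out c Γ (z j))) ∧
  (∀ u Y, LD u Y ⊆ Metric.closedBall (xhat u Y) δ)

/-- The data `(u, Y)` is consistent for the disturbed `Γ`-subsystem. -/
def DConsistent {n m p l : ℕ} (F : (Fin n → ℝ) → (Fin m → ℝ) → (Fin n → ℝ))
    (c : (Fin n → ℝ) → Fin p → ℝ) (Γ : Finset (Fin p)) (wbar δ : ℝ)
    (xhat : (Fin l → (Fin m → ℝ)) → (Fin (l+1) → ({i // i ∈ Γ} → ℝ)) → (Fin n → ℝ))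
    (u : Fin l → (Fin m → ℝ)) (Y : Fin (l+1) → ({i // i ∈ Γ} → ℝ)) : Prop :=
  ∃ z : Fin (l+1) → (Fin n → ℝ), ∃ w : Fin l → (Fin n → ℝ),
    ‖z 0 - xhat u Y‖ ≤ δ ∧ (∀ j, ‖w j‖ ≤ wbar) ∧ DTraj F u w z ∧
    ∀ j, out c Γ (z j) = Y j

/-- `z0` is a plausible initial state for the disturbed system under at most `s` attacks. -/
def DPlausible {n m p l : ℕ} (F : (Fin n → ℝ) → (Fin m → ℝ) → (Fin n → ℝ))
    (c : (Fin n → ℝ) → Fin p → ℝ) (s : ℕ) (wbar : ℝ) (u : Fin l → (Fin m → ℝ))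
    (y : Fin (l+1) → Fin p → ℝ) (z0 : Fin n → ℝ) : Prop :=
  ∃ z : Fin (l+1) → (Fin n → ℝ), ∃ w : Fin l → (Fin n → ℝ),
    z 0 = z0 ∧ (∀ j, ‖w j‖ ≤ wbar) ∧ DTraj F u w z ∧
    ∃ A : Finset (Fin p), A.card ≤ s ∧ ∀ j, ∀ i ∉ A, y j i = c (z j) i

/-- under `s`-sparse `δ`-bounded observability, the set of plausible initial
states is contained in the union of the estimate sets over consistent sensor subsets of
cardinality `p - s`. -/
theorem stmt9 {n m p l : ℕ} (F : (Fin n → ℝ) → (Fin m → ℝ) → (Fin n → ℝ))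
    (c : (Fin n → ℝ) → Fin p → ℝ) (s : ℕ) (wbar δ : ℝ)
    (LD : (Γ : Finset (Fin p)) →
      (Fin l → (Fin m → ℝ)) → (Fin (l+1) → ({i // i ∈ Γ} → ℝ)) → Set (Fin n → ℝ))
    (xhat : (Γ : Finset (Fin p)) →
      (Fin l → (Fin m → ℝ)) → (Fin (l+1) → ({i // i ∈ Γ} → ℝ)) → (Fin n → ℝ))
    (hLD : ∀ Γ : Finset (Fin p), Γ.card = p - s →
      IsDObsMap F c Γ wbar δ (LD Γ) (xhat Γ))
    (u : Fin l → (Fin m → ℝ)) (y : Fin (l+1) → Fin p → ℝ) :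
    {z0 | DPlausible F c s wbar u y z0} ⊆
      {z0 | ∃ Γ : Finset (Fin p), Γ.card = p - s ∧
        DConsistent F c Γ wbar δ (xhat Γ) u (res Γ y) ∧ z0 ∈ LD Γ u (res Γ y)} := by
  rintro z0 ⟨z, w, hz0, hw, htraj, A, hA, hy⟩
  have hsub : p - s ≤ Aᶜ.card := by
    have : Aᶜ.card = p - A.card := by
      simp [Finset.card_compl]
    omega
  obtain ⟨Γ, hΓsub, hΓcard⟩ := Finset.exists_subset_card_eq hsub
  have hres : res Γ y = fun j => out c Γ (z j) := by
    funext j i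
    exact hy j i.1 (fun hmem => (Finset.mem_compl.mp (hΓsub i.2)) hmem)
  obtain ⟨hmem, hball⟩ := hLD Γ hΓcard
  have hz0mem : z0 ∈ LD Γ u (res Γ y) := by
    rw [hres, ← hz0]; exact hmem u w z hw htraj
  refine ⟨Γ, hΓcard, ⟨z, w, ?_, hw, htraj, fun j => congrFun hres.symm j⟩, hz0mem⟩
  have := hball u (res Γ y) hz0mem
  rw [Metric.mem_closedBall, dist_eq_norm] at this
  rw [hz0]; exact this
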